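/- PSL₂(ℤ) is isomorphic to the free product ℤ/3 * ℤ/2; consequently, conjugacy classes of finite-index subgroups of PSL₂(ℤ) are in bijection with isomorphism classes of transitive actions of ℤ/3 * ℤ/2 on finite sets with a marked point, up to change of marked point. -/

import Mathlib

open Matrix ModularGroup UpperHalfPlane Monoid
open scoped MatrixGroups Pointwise Monoid.Coprod

/-!
The elements `S` and `TS` of `PSL₂(ℤ)` have orders dividing 2 and 3, so they define a homomorphism
`ℤ/3 ∗ ℤ/2 → PSL₂(ℤ)`, which is onto because `S` and `T` generate `SL₂(ℤ)`. It is injective by the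
ping-pong lemma for the action on the upper half-plane: `S : τ ↦ -1/τ` maps the right half
`{0 < re τ}` into the left half `{re τ < 0}`, while `TS : τ ↦ 1 - 1/τ` and
`(TS)² : τ ↦ -1/(τ - 1)` map the left half into the right half.
-/

def zmodPowHom {G : Type*} [Group G] (n : ℕ) [NeZero n] (g : G) (hg : g ^ n = 1) :
    Multiplicative (ZMod n) →* G where
  toFun x := g ^ x.toAdd.val
  map_one' := by simp
  map_mul' x y := by
    simp only [toAdd_mul, ZMod.val_add, ← pow_add]
    exact (pow_eq_pow_mod _ hg).symm

theorem zmodPowHom_apply {G : Type*} [Group G] (n : ℕ) [NeZero n] (g : G) (hg : g ^ n = 1)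
    (x : Multiplicative (ZMod n)) : zmodPowHom n g hg x = g ^ x.toAdd.val := rfl

namespace Monoid.Coprod

universe u

variable {G α : Type*} {H₁ H₂ : Type u} [Group G] [Group H₁] [Group H₂] [MulAction G α]

open Cardinal in
theorem lift_injective_of_ping_pong (f₁ : H₁ →* G) (f₂ : H₂ →* G) (hcard : 3 ≤ #H₁)
    (X₁ X₂ : Set α) (hX₁ : X₁.Nonempty) (hX₂ : X₂.Nonempty) (hdisj : Disjoint X₁ X₂)
    (hpp₁ : ∀ h, h ≠ 1 → f₁ h • X₂ ⊆ X₁) (hpp₂ : ∀ h, h ≠ 1 → f₂ h • X₁ ⊆ X₂) :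
    Function.Injective (lift f₁ f₂) := by
  let H : Bool → Type u := fun b => cond b H₁ H₂
  let _ : ∀ b, Group (H b) := fun b => b.casesOn ‹Group H₂› ‹Group H₁›
  let f : ∀ b, H b →* G := fun b => b.casesOn f₂ f₁
  let toCoprodI : H₁ ∗ H₂ →* CoprodI H :=
    lift (CoprodI.of (M := H) (i := true)) (CoprodI.of (M := H) (i := false))
  let g : ∀ b, H b →* H₁ ∗ H₂ := fun b => b.casesOn inr inl
  let ofCoprodI : CoprodI H →* H₁ ∗ H₂ := CoprodI.lift g
  have hleft : Function.LeftInverse ofCoprodI toCoprodI := by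
    have : ofCoprodI.comp toCoprodI = .id _ := hom_ext
      (MonoidHom.ext fun m => CoprodI.lift_of (i := true) g m)
      (MonoidHom.ext fun m => CoprodI.lift_of (i := false) g m)
    exact DFunLike.congr_fun this
  have hcomp : lift f₁ f₂ = (CoprodI.lift f).comp toCoprodI := by
    refine hom_ext ?_ ?_
    · ext m; exact (CoprodI.lift_of (M := H) (i := true) f m).symm
    · ext m; exact (CoprodI.lift_of (M := H) (i := false) f m).symm
  rw [hcomp]
  refine (CoprodI.lift_injective_of_ping_pong f (Or.inr ⟨true, hcard⟩)
    (fun b => b.casesOn X₂ X₁) ?_ ?_ ?_).comp hleft.injective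
  · rintro (_ | _)
    exacts [hX₂, hX₁]
  · rintro (_ | _) (_ | _) hne
    exacts [absurd rfl hne, hdisj.symm, hdisj, absurd rfl hne]
  · rintro (_ | _) (_ | _) hne
    exacts [absurd rfl hne, hpp₂, hpp₁, absurd rfl hne]

end Monoid.Coprod

theorem Subgroup.neg_one_mem_center {G : Type*} [Group G] [HasDistribNeg G] :
    (-1 : G) ∈ Subgroup.center G :=
  Subgroup.mem_center_iff.mpr Commute.neg_one_right

namespace ModularGroup

theorem smul_eq_self_of_mem_center {g : SL(2, ℤ)} (hg : g ∈ Subgroup.center SL(2, ℤ)) (τ : ℍ) :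
    g • τ = τ := by
  obtain ⟨r, hr, hrg⟩ := Matrix.SpecialLinearGroup.mem_center_iff.mp hg
  rw [Fintype.card_fin, sq_eq_one_iff] at hr
  obtain rfl | rfl := hr
  · rw [show g = 1 from Subtype.ext (by simpa using hrg.symm), one_smul]
  · rw [show g = -1 from Subtype.ext (by simpa using hrg.symm), SL_neg_smul, one_smul]

noncomputable instance : MulAction PSL(2, ℤ) ℍ :=
  MulAction.compHom ℍ <| QuotientGroup.lift _ (MulAction.toPermHom SL(2, ℤ) ℍ) fun _ hg =>
    Equiv.ext (smul_eq_self_of_mem_center hg)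

theorem S_sq : S ^ 2 = -1 := by
  ext i j; fin_cases i <;> fin_cases j <;> simp [sq, coe_S]

theorem T_mul_S_pow_three : (T * S) ^ 3 = -1 := by
  ext i j; fin_cases i <;> fin_cases j <;> simp [pow_succ, coe_S, coe_T, Matrix.mul_apply]

theorem T_mul_S_sq : (T * S) ^ 2 = S * T⁻¹ := by
  ext i j; fin_cases i <;> fin_cases j <;> simp [sq, coe_S, coe_T, Matrix.mul_apply]

theorem re_S_smul (τ : ℍ) : (S • τ).re = -τ.re / Complex.normSq τ := by
  rw [modular_S_smul, ← coe_re, coe_mk]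
  simp [Complex.inv_re, neg_div]

theorem re_S_smul_pos {τ : ℍ} (hτ : τ.re < 0) : 0 < (S • τ).re := by
  rw [re_S_smul]
  exact div_pos (neg_pos.mpr hτ) τ.normSq_pos

theorem re_S_smul_neg {τ : ℍ} (hτ : 0 < τ.re) : (S • τ).re < 0 := by
  rw [re_S_smul]
  exact div_neg_of_neg_of_pos (neg_neg_iff_pos.mpr hτ) τ.normSq_pos

theorem re_T_mul_S_smul_pos {τ : ℍ} (hτ : τ.re < 0) : 0 < ((T * S) • τ).re := by
  rw [mul_smul, modular_T_smul, vadd_re]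
  linarith [re_S_smul_pos hτ]

theorem re_T_mul_S_sq_smul_pos {τ : ℍ} (hτ : τ.re < 0) : 0 < ((T * S) ^ 2 • τ).re := by
  rw [T_mul_S_sq, mul_smul, ← _root_.zpow_neg_one, modular_T_zpow_smul]
  exact re_S_smul_pos (by rw [vadd_re]; push_cast; linarith)

theorem mk_S_sq : (S : PSL(2, ℤ)) ^ 2 = 1 := by
  rw [← QuotientGroup.mk_pow, S_sq, QuotientGroup.eq_one_iff]
  exact Subgroup.neg_one_mem_center

theorem mk_T_mul_S_pow_three : ((T * S : SL(2, ℤ)) : PSL(2, ℤ)) ^ 3 = 1 := by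
  rw [← QuotientGroup.mk_pow, T_mul_S_pow_three, QuotientGroup.eq_one_iff]
  exact Subgroup.neg_one_mem_center

noncomputable def coprodToPSL : Multiplicative (ZMod 3) ∗ Multiplicative (ZMod 2) →* PSL(2, ℤ) :=
  Coprod.lift (zmodPowHom 3 _ mk_T_mul_S_pow_three) (zmodPowHom 2 _ mk_S_sq)

theorem coprodToPSL_inl_ofAdd_one :
    coprodToPSL (Coprod.inl (.ofAdd 1)) = ((T * S : SL(2, ℤ)) : PSL(2, ℤ)) := by
  simp [coprodToPSL, zmodPowHom_apply, ZMod.val_one]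

theorem coprodToPSL_inr_ofAdd_one : coprodToPSL (Coprod.inr (.ofAdd 1)) = (S : PSL(2, ℤ)) := by
  simp [coprodToPSL, zmodPowHom_apply, ZMod.val_one]

theorem coprodToPSL_surjective : Function.Surjective coprodToPSL := by
  have hS : (S : PSL(2, ℤ)) ∈ coprodToPSL.range := ⟨_, coprodToPSL_inr_ofAdd_one⟩
  have hT : (T : PSL(2, ℤ)) ∈ coprodToPSL.range := by
    have hTS : ((T * S : SL(2, ℤ)) : PSL(2, ℤ)) ∈ coprodToPSL.range :=
      ⟨_, coprodToPSL_inl_ofAdd_one⟩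
    simpa using mul_mem hTS (inv_mem hS)
  rw [← MonoidHom.range_eq_top, eq_top_iff, ← QuotientGroup.range_mk' (Subgroup.center SL(2, ℤ)),
    MonoidHom.range_eq_map, ← SpecialLinearGroup.SL2Z_generators, MonoidHom.map_closure,
    Subgroup.closure_le]
  rintro _ ⟨g, rfl | rfl, rfl⟩
  exacts [hS, hT]

theorem coprodToPSL_injective : Function.Injective coprodToPSL := by
  refine Coprod.lift_injective_of_ping_pong _ _ (by simp) {τ : ℍ | 0 < τ.re} {τ : ℍ | τ.re < 0}
    ⟨(1 : ℝ) +ᵥ I, by simp [I_re]⟩ ⟨(-1 : ℝ) +ᵥ I, by simp [I_re]⟩ ?_ ?_ ?_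
  · exact Set.disjoint_left.mpr fun τ (h₁ : 0 < τ.re) h₂ => lt_asymm h₁ h₂
  · rintro h hh _ ⟨τ, hτ, rfl⟩
    obtain ⟨z, rfl⟩ := Multiplicative.ofAdd.surjective h
    fin_cases z
    · exact absurd ofAdd_zero hh
    -- `zmodPowHom n g _ (ofAdd k)` is `g ^ k`, and `PSL(2, ℤ)` acts through `SL(2, ℤ)`, by `rfl`
    · exact re_T_mul_S_smul_pos hτ
    · exact re_T_mul_S_sq_smul_pos hτ
  · rintro h hh _ ⟨τ, hτ, rfl⟩
    obtain ⟨z, rfl⟩ := Multiplicative.ofAdd.surjective h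
    fin_cases z
    · exact absurd ofAdd_zero hh
    · exact re_S_smul_neg hτ

end ModularGroup

/-- `PSL₂(ℤ)`, the quotient of `SL₂(ℤ)` by its center, is isomorphic to the
free product `ℤ/3 ∗ ℤ/2`. -/
theorem stmt_18 :
    Nonempty
      ((Matrix.SpecialLinearGroup (Fin 2) ℤ ⧸
          Subgroup.center (Matrix.SpecialLinearGroup (Fin 2) ℤ)) ≃*
        Monoid.Coprod (Multiplicative (ZMod 3)) (Multiplicative (ZMod 2))) :=
  ⟨(MulEquiv.ofBijective ModularGroup.coprodToPSL
    ⟨ModularGroup.coprodToPSL_injective, ModularGroup.coprodToPSL_surjective⟩).symm⟩
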